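/- arXiv:2403.00374 — 5 statements merged into one kernel-verified Lean document; each statement's English description precedes it below -/
import Mathlib

section
/- Let Z be a real random variable with a density with respect to Lebesgue measure, such that z·P(Z ≥ z) → 0 as z → +∞ and the function z ↦ P(Z ≥ z) is integrable on ℝ. Then for every event A of positive probability and every real x < E_A(Z) (the conditional expectation of Z given A), one has P(A) ≤ (∫_x^∞ P(Z ≥ z) dz) / (E_A(Z) − x). -/
/-!
On `A` one has `Z - x ≤ (Z - x)⁺`, so
`μ(A) (E_A(Z) - x) = ∫_A (Z - x) ≤ E[(Z - x)⁺]`, and the layer-cake formula computes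
`E[(Z - x)⁺] = ∫_0^∞ P(Z ≥ t + x) dt = ∫_x^∞ P(Z ≥ z) dz`.
-/

open MeasureTheory Filter

namespace MeasureTheory

variable {Ω : Type*} [MeasurableSpace Ω] {μ : Measure Ω} [IsFiniteMeasure μ] {Z : Ω → ℝ}

theorem integral_Ioi_comp_add_right (g : ℝ → ℝ) (x : ℝ) :
    ∫ t in Set.Ioi 0, g (t + x) = ∫ z in Set.Ioi x, g z := by
  have hpre : (· + x) ⁻¹' Set.Ioi x = Set.Ioi 0 := by ext t; simp
  rw [← hpre]
  exact (measurePreserving_add_right volume x).setIntegral_preimage_emb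
    (measurableEmbedding_addRight x) g _

theorem Integrable.integral_max_sub_zero_eq_integral_meas_le (hZ : Integrable Z μ) (x : ℝ) :
    ∫ ω, max (Z ω - x) 0 ∂μ = ∫ z in Set.Ici x, μ.real {ω | z ≤ Z ω} := by
  have hlevel : ∀ t > (0 : ℝ), {ω | t ≤ max (Z ω - x) 0} = {ω | t + x ≤ Z ω} := by
    intro t ht
    ext ω
    simp only [Set.mem_ofPred_eq, le_max_iff, not_le.mpr ht, or_false, le_sub_iff_add_le]
  have hZx : Integrable (fun ω => Z ω - x) μ := hZ.sub (integrable_const x)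
  rw [hZx.pos_part.integral_eq_integral_meas_le (Eventually.of_forall fun ω => le_max_right _ _),
    setIntegral_congr_fun measurableSet_Ioi fun t ht => congrArg μ.real (hlevel t ht),
    integral_Ioi_comp_add_right (fun z => μ.real {ω | z ≤ Z ω}), integral_Ici_eq_integral_Ioi]

theorem setIntegral_sub_le_integral_max_sub_zero (hZ : Integrable Z μ)
    {A : Set Ω} (hA : MeasurableSet A) (x : ℝ) :
    ∫ ω in A, Z ω ∂μ - μ.real A * x ≤ ∫ ω, max (Z ω - x) 0 ∂μ := by
  have hZx : Integrable (fun ω => Z ω - x) μ := hZ.sub (integrable_const x)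
  calc ∫ ω in A, Z ω ∂μ - μ.real A * x = ∫ ω in A, (Z ω - x) ∂μ := by
        rw [integral_sub hZ.integrableOn (integrableOn_const (measure_ne_top μ A)),
          setIntegral_const, smul_eq_mul]
    _ ≤ ∫ ω in A, max (Z ω - x) 0 ∂μ :=
        setIntegral_mono_on hZx.integrableOn hZx.pos_part.integrableOn hA
          fun ω _ => le_max_left _ _
    _ ≤ ∫ ω, max (Z ω - x) 0 ∂μ :=
        setIntegral_le_integral hZx.pos_part (Eventually.of_forall fun ω => le_max_right _ _)

end MeasureTheory

theorem amoeba_stmt5_general {Ω : Type*} [MeasurableSpace Ω] (μ : Measure Ω)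
    [IsProbabilityMeasure μ] (Z : Ω → ℝ)
    (hZint : Integrable Z μ)
    (A : Set Ω) (hA : MeasurableSet A) (hApos : 0 < μ A)
    (x : ℝ) (hx : x < (μ A).toReal⁻¹ * ∫ ω in A, Z ω ∂μ) :
    (μ A).toReal ≤ (∫ z in Set.Ici x, (μ {ω | z ≤ Z ω}).toReal) /
      ((μ A).toReal⁻¹ * (∫ ω in A, Z ω ∂μ) - x) := by
  have hA_real : 0 < μ.real A := ENNReal.toReal_pos hApos.ne' (measure_ne_top μ A)
  change x < (μ.real A)⁻¹ * ∫ ω in A, Z ω ∂μ at hx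
  change μ.real A ≤ (∫ z in Set.Ici x, μ.real {ω | z ≤ Z ω}) /
    ((μ.real A)⁻¹ * (∫ ω in A, Z ω ∂μ) - x)
  rw [le_div_iff₀ (sub_pos.mpr hx), ← hZint.integral_max_sub_zero_eq_integral_meas_le x]
  calc μ.real A * ((μ.real A)⁻¹ * ∫ ω in A, Z ω ∂μ - x)
      = ∫ ω in A, Z ω ∂μ - μ.real A * x := by field_simp
    _ ≤ ∫ ω, max (Z ω - x) 0 ∂μ := setIntegral_sub_le_integral_max_sub_zero hZint hA x

/-- Lemma 3: let `Z` be a real random variable with a density, such that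
`z ↦ z · P(Z ≥ z)` tends to `0` at `+∞` and `z ↦ P(Z ≥ z)` is integrable near `+∞`.
Then for every event `A` of positive probability and every `x < E_A(Z)`,
`P(A) ≤ (∫_x^∞ P(Z ≥ z) dz) / (E_A(Z) − x)`. -/
theorem amoeba_stmt5 {Ω : Type*} [MeasurableSpace Ω] (μ : Measure Ω)
    [IsProbabilityMeasure μ] (Z : Ω → ℝ) (hZmeas : Measurable Z)
    (hdensity : μ.map Z ≪ (volume : Measure ℝ))
    (hZint : Integrable Z μ)
    (htail : Tendsto (fun z : ℝ => z * (μ {ω | z ≤ Z ω}).toReal) atTop (nhds 0))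
    (htailint : ∀ a : ℝ, IntegrableOn (fun z : ℝ => (μ {ω | z ≤ Z ω}).toReal) (Set.Ici a))
    (A : Set Ω) (hA : MeasurableSet A) (hApos : 0 < μ A)
    (x : ℝ) (hx : x < (μ A).toReal⁻¹ * ∫ ω in A, Z ω ∂μ) :
    (μ A).toReal ≤ (∫ z in Set.Ici x, (μ {ω | z ≤ Z ω}).toReal) /
      ((μ A).toReal⁻¹ * (∫ ω in A, Z ω ∂μ) - x) :=
  amoeba_stmt5_general μ Z hZint A hA hApos x hx
end

section
/- Let Z ~ N_{ℂ^N}(0, B) be a centered complex Gaussian vector with positive definite Hermitian covariance B. Then for every y > ‖B‖, P(‖Z‖² ≥ N·y) ≤ (y^N / det(B)) · exp(N(1 − y/‖B‖)). -/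
open MeasureTheory
open scoped ComplexOrder
open Real Matrix
open scoped ENNReal

lemma integrable_gauss1 (d : ℝ) (hd : 0 < d) : Integrable (fun v : ℂ => Real.exp (-(d * ‖v‖ ^ 2))) := by
  have := (GaussianFourier.integrable_cexp_neg_mul_sq_norm_add (V := ℂ) (b := (d:ℂ)) (by simpa using hd) 0 0).norm
  refine this.congr ?_
  filter_upwards with v
  simp [Complex.norm_exp]
  norm_cast
  exact Or.inl rfl

lemma integral_gauss1 (d : ℝ) (hd : 0 < d) : ∫ v : ℂ, Real.exp (-(d * ‖v‖ ^ 2)) = π / d := by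
  have : ∀ v : ℂ, Real.exp (-(d * ‖v‖ ^ 2)) = Real.exp (-d * ‖v‖^2) := by
    intro v; rw [neg_mul]
  simp_rw [this, GaussianFourier.integral_rexp_neg_mul_sq_norm hd, Complex.finrank_real_complex]
  norm_num

lemma lintegral_gauss_diag {N : ℕ} (d : Fin N → ℝ) (hd : ∀ i, 0 < d i) :
    ∫⁻ z : Fin N → ℂ, ENNReal.ofReal (Real.exp (-∑ i, d i * ‖z i‖ ^ 2))
      = ENNReal.ofReal (∏ i, π / d i) := by
  have hint : Integrable (fun z : Fin N → ℂ => ∏ i, Real.exp (-(d i * ‖z i‖ ^ 2))) :=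
    Integrable.fintype_prod (𝕜 := ℝ) (f := fun i v => Real.exp (-(d i * ‖v‖ ^ 2)))
      (fun i => integrable_gauss1 (d i) (hd i))
  have h1 : ∀ z : Fin N → ℂ, Real.exp (-∑ i, d i * ‖z i‖ ^ 2)
      = ∏ i, Real.exp (-(d i * ‖z i‖ ^ 2)) := by
    intro z; rw [← Real.exp_sum]; simp [Finset.sum_neg_distrib]
  simp_rw [h1]
  rw [← ofReal_integral_eq_lintegral_ofReal hint]
  · rw [MeasureTheory.integral_fintype_prod_volume_eq_prod (𝕜 := ℝ)
      (f := fun i v => Real.exp (-(d i * ‖v‖ ^ 2)))]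
    congr 1
    exact Finset.prod_congr rfl fun i _ => integral_gauss1 (d i) (hd i)
  · filter_upwards with z
    positivity
open MeasureTheory Real Matrix

lemma continuous_sumsq {N : ℕ} : Continuous fun z : Fin N → ℂ => ∑ i, ‖z i‖ ^ 2 :=
  continuous_finset_sum _ fun i _ => (continuous_norm.comp (continuous_apply i)).pow 2

lemma continuous_quad {N : ℕ} (M : Matrix (Fin N) (Fin N) ℂ) :
    Continuous fun z : Fin N → ℂ => (star z ⬝ᵥ (M *ᵥ z)).re := by
  apply Complex.continuous_re.comp
  simp only [dotProduct, Matrix.mulVec, Pi.star_apply]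
  exact continuous_finset_sum _ fun i _ =>
    ((Complex.continuous_conj.comp (continuous_apply i)).mul
      (continuous_finset_sum _ fun j _ => continuous_const.mul (continuous_apply j)))

lemma star_dot_self {N : ℕ} (w : Fin N → ℂ) :
    star w ⬝ᵥ w = ((∑ i, ‖w i‖ ^ 2 : ℝ) : ℂ) := by
  simp only [dotProduct, Pi.star_apply, Complex.ofReal_sum]
  refine Finset.sum_congr rfl fun i _ => ?_
  rw [Complex.star_def, mul_comm, Complex.mul_conj, Complex.normSq_eq_norm_sq]

lemma norm_sq_mulVec_unitary {N : ℕ} (U : Matrix (Fin N) (Fin N) ℂ)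
    (hU : U ∈ Matrix.unitaryGroup (Fin N) ℂ) (z : Fin N → ℂ) :
    ∑ i, ‖(U.mulVec z) i‖ ^ 2 = ∑ i, ‖z i‖ ^ 2 := by
  have hUinv' : Uᴴ * U = 1 := (Unitary.mem_iff.mp hU).1
  have key : star (U.mulVec z) ⬝ᵥ (U.mulVec z) = star z ⬝ᵥ z := by
    rw [star_mulVec, dotProduct_mulVec, vecMul_vecMul, hUinv', vecMul_one]
  rw [star_dot_self, star_dot_self] at key
  exact_mod_cast key

lemma measurePreserving_mulVec_unitary {N : ℕ} (U : Matrix (Fin N) (Fin N) ℂ)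
    (hU : U ∈ Matrix.unitaryGroup (Fin N) ℂ) :
    MeasurePreserving (fun z : Fin N → ℂ => U.mulVec z) volume volume := by
  classical
  set f : (Fin N → ℂ) →ₗ[ℝ] (Fin N → ℂ) := (Matrix.mulVecLin U).restrictScalars ℝ with hf
  have hfapp : ∀ z, f z = U.mulVec z := fun z => rfl
  have hUinv : U * Uᴴ = 1 := (Unitary.mem_iff.mp hU).2
  have hUinv' : Uᴴ * U = 1 := (Unitary.mem_iff.mp hU).1
  have hbij : Function.Bijective f := by
    constructor
    · intro a b hab
      simp only [hfapp] at hab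
      have := congrArg (fun v => (star U).mulVec v) hab
      simpa [Matrix.mulVec_mulVec, star_eq_conjTranspose, hUinv', Matrix.one_mulVec] using this
    · intro b
      refine ⟨(star U).mulVec b, ?_⟩
      simp [hfapp, Matrix.mulVec_mulVec, star_eq_conjTranspose, hUinv, Matrix.one_mulVec]
  have hdet : LinearMap.det f ≠ 0 := by
    have h := (LinearEquiv.ofBijective f hbij).isUnit_det'
    rw [show ((LinearEquiv.ofBijective f hbij : (Fin N → ℂ) ≃ₗ[ℝ] (Fin N → ℂ)) : (Fin N → ℂ) →ₗ[ℝ] (Fin N → ℂ)) = f from rfl] at h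
    exact isUnit_iff_ne_zero.mp h
  have hmap := Measure.map_linearMap_addHaar_eq_smul_addHaar (volume : Measure (Fin N → ℂ)) hdet
  set K : Set (Fin N → ℂ) := (fun z : Fin N → ℂ => ∑ i, ‖z i‖ ^ 2) ⁻¹' Set.Iic 1 with hK
  have hKmeas : MeasurableSet K := continuous_sumsq.measurable measurableSet_Iic
  have hKinv : f ⁻¹' K = K := by
    ext z
    simp only [Set.mem_preimage, hfapp, hK, Set.mem_Iic, norm_sq_mulVec_unitary U hU z]
  have hKpos : 0 < volume K := by
    refine lt_of_lt_of_le (Metric.measure_ball_pos volume (0 : Fin N → ℂ) (r := ((N:ℝ)+1)⁻¹) (by positivity)) (measure_mono ?_)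
    intro z hz
    simp only [Metric.mem_ball, dist_zero_right] at hz
    have hzi : ∀ i, ‖z i‖ ≤ ((N:ℝ)+1)⁻¹ := fun i =>
      le_of_lt (lt_of_le_of_lt (norm_le_pi_norm z i) hz)
    simp only [hK, Set.mem_preimage, Set.mem_Iic]
    have hN : (0:ℝ) < (N:ℝ) + 1 := by positivity
    calc ∑ i, ‖z i‖ ^ 2 ≤ ∑ _i : Fin N, (((N:ℝ)+1)⁻¹)^2 :=
          Finset.sum_le_sum fun i _ => pow_le_pow_left₀ (norm_nonneg _) (hzi i) 2
      _ = N * (((N:ℝ)+1)⁻¹)^2 := by simp [mul_comm]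
      _ ≤ ((N:ℝ)+1) * (((N:ℝ)+1)⁻¹)^2 := by
          apply mul_le_mul_of_nonneg_right (by linarith) (by positivity)
      _ = ((N:ℝ)+1)⁻¹ := by rw [sq]; field_simp
      _ ≤ 1 := by rw [inv_le_one_iff₀]; right; linarith
  have hKfin : volume K < ⊤ := by
    refine lt_of_le_of_lt (measure_mono (fun z hz => ?_))
      (MeasureTheory.measure_closedBall_lt_top (x := (0 : Fin N → ℂ)) (r := 1))
    simp only [hK, Set.mem_preimage, Set.mem_Iic] at hz
    simp only [Metric.mem_closedBall, dist_zero_right]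
    rw [pi_norm_le_iff_of_nonneg zero_le_one]
    intro i
    have h1 : ‖z i‖ ^ 2 ≤ 1 :=
      le_trans (Finset.single_le_sum (f := fun i => ‖z i‖ ^ 2)
        (fun j _ => by positivity) (Finset.mem_univ i)) hz
    have : ‖z i‖ = ‖z i‖ := rfl
    nlinarith [norm_nonneg (z i)]
  have happ := congrArg (fun m : Measure (Fin N → ℂ) => m K) hmap
  simp only [Measure.smul_apply, smul_eq_mul] at happ
  rw [Measure.map_apply (f.continuous_of_finiteDimensional).measurable hKmeas, hKinv] at happ
  have hscal : ENNReal.ofReal |(LinearMap.det f)⁻¹| = 1 := by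
    have := (ENNReal.mul_left_inj (ne_of_gt hKpos) (ne_of_lt hKfin)
      (a := ENNReal.ofReal |(LinearMap.det f)⁻¹|) (b := 1)).mp
    simpa using this (by rw [one_mul]; exact happ.symm)
  refine ⟨(f.continuous_of_finiteDimensional).measurable, ?_⟩
  have : Measure.map f (volume : Measure (Fin N → ℂ)) = volume := by
    rw [hmap, hscal, one_smul]
  convert this using 2
  · rfl
  · exact (funext hfapp).symm
open scoped ComplexOrder ENNReal

lemma diag_quad {N : ℕ} (r : Fin N → ℝ) (w : Fin N → ℂ) :
    star w ⬝ᵥ ((diagonal fun i => ((r i : ℝ) : ℂ)) *ᵥ w)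
      = ((∑ i, r i * ‖w i‖ ^ 2 : ℝ) : ℂ) := by
  simp only [dotProduct, Pi.star_apply, mulVec_diagonal, Complex.ofReal_sum]
  refine Finset.sum_congr rfl fun i _ => ?_
  rw [Complex.star_def,
    show (starRingEnd ℂ) (w i) * (((r i : ℝ) : ℂ) * w i)
        = ((r i : ℝ) : ℂ) * (w i * (starRingEnd ℂ) (w i)) by ring,
    Complex.mul_conj, Complex.normSq_eq_norm_sq]
  push_cast
  ring

lemma conj_quad {N : ℕ} (V M : Matrix (Fin N) (Fin N) ℂ) (z : Fin N → ℂ) :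
    star z ⬝ᵥ ((V * M * Vᴴ) *ᵥ z) = star (Vᴴ *ᵥ z) ⬝ᵥ (M *ᵥ (Vᴴ *ᵥ z)) := by
  rw [star_mulVec, conjTranspose_conjTranspose, ← mulVec_mulVec, ← mulVec_mulVec,
    dotProduct_mulVec (star z)]

lemma key_integral {N : ℕ} (B : Matrix (Fin N) (Fin N) ℂ) (hB : B.PosDef) (t : ℝ)
    (ht : ∀ i, 0 < (hB.1.eigenvalues i)⁻¹ - t) :
    ∫⁻ z : Fin N → ℂ, ENNReal.ofReal (Real.exp
        (-((star z ⬝ᵥ (B⁻¹ *ᵥ z)).re - t * ∑ i, ‖z i‖ ^ 2)))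
      = ENNReal.ofReal (∏ i, π / ((hB.1.eigenvalues i)⁻¹ - t)) := by
  classical
  set ev := hB.1.eigenvalues with hev
  have hevpos : ∀ i, 0 < ev i := hB.eigenvalues_pos
  set V : Matrix (Fin N) (Fin N) ℂ := (hB.1.eigenvectorUnitary : Matrix (Fin N) (Fin N) ℂ) with hV
  have hVmem : V ∈ Matrix.unitaryGroup (Fin N) ℂ := (hB.1.eigenvectorUnitary).2
  have hVsmem : Vᴴ ∈ Matrix.unitaryGroup (Fin N) ℂ := by
    rw [show Vᴴ = star V from rfl]
    exact Unitary.star_mem hVmem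
  have hVV : V * Vᴴ = 1 := (Unitary.mem_iff.mp hVmem).2
  have hVV' : Vᴴ * V = 1 := (Unitary.mem_iff.mp hVmem).1
  -- B⁻¹ formula
  have hBinv : B⁻¹ = V * (diagonal fun i => (((ev i)⁻¹ : ℝ) : ℂ)) * Vᴴ := by
    apply inv_eq_right_inv
    conv_lhs => rw [hB.1.spectral_theorem]
    calc (V * diagonal (RCLike.ofReal ∘ ev) * Vᴴ) * (V * (diagonal fun i => (((ev i)⁻¹ : ℝ) : ℂ)) * Vᴴ)
        = V * (diagonal (RCLike.ofReal ∘ ev) * (Vᴴ * V) * (diagonal fun i => (((ev i)⁻¹ : ℝ) : ℂ))) * Vᴴ := by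
          simp only [Matrix.mul_assoc]
      _ = 1 := by
          rw [hVV', mul_one, diagonal_mul_diagonal]
          have : (fun i => (RCLike.ofReal ∘ ev) i * (((ev i)⁻¹ : ℝ) : ℂ)) = fun _ => (1:ℂ) := by
            funext i
            show ((ev i : ℝ) : ℂ) * (((ev i)⁻¹ : ℝ) : ℂ) = 1
            rw [← Complex.ofReal_mul, mul_inv_cancel₀ (ne_of_gt (hevpos i)), Complex.ofReal_one]
          rw [this, diagonal_one, mul_one, hVV]
  -- quadratic form identity
  have hquad : ∀ z : Fin N → ℂ,
      (star z ⬝ᵥ (B⁻¹ *ᵥ z)).re - t * ∑ i, ‖z i‖ ^ 2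
        = ∑ i, ((ev i)⁻¹ - t) * ‖(Vᴴ *ᵥ z) i‖ ^ 2 := by
    intro z
    rw [hBinv, conj_quad, diag_quad, Complex.ofReal_re,
      ← norm_sq_mulVec_unitary Vᴴ hVsmem z, Finset.mul_sum, ← Finset.sum_sub_distrib]
    exact Finset.sum_congr rfl fun i _ => by ring
  simp_rw [hquad]
  have hmg : Measurable fun w : Fin N → ℂ =>
      ENNReal.ofReal (Real.exp (-∑ i, ((ev i)⁻¹ - t) * ‖w i‖ ^ 2)) := by
    apply Measurable.ennreal_ofReal
    apply Continuous.measurable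
    exact (Real.continuous_exp.comp (continuous_finset_sum _ fun i _ =>
      (continuous_const.mul ((continuous_norm.comp (continuous_apply i)).pow 2))).neg)
  refine Eq.trans ?_ (lintegral_gauss_diag _ ht)
  exact (measurePreserving_mulVec_unitary Vᴴ hVsmem).lintegral_comp hmg

lemma eigenvalue_le_opNorm {N : ℕ} (B : Matrix (Fin N) (Fin N) ℂ) (hB : B.IsHermitian) (i : Fin N) :
    hB.eigenvalues i ≤ ‖Matrix.toEuclideanCLM (n := Fin N) (𝕜 := ℂ) B‖ := by
  classical
  set v : EuclideanSpace ℂ (Fin N) := hB.eigenvectorBasis i with hv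
  have hnv : ‖v‖ = 1 := hB.eigenvectorBasis.orthonormal.1 i
  have happ : Matrix.toEuclideanCLM (n := Fin N) (𝕜 := ℂ) B v = hB.eigenvalues i • v := by
    apply WithLp.ofLp_injective
    rw [Matrix.ofLp_toEuclideanCLM]
    have : WithLp.ofLp v = ⇑(hB.eigenvectorBasis i) := rfl
    rw [this, hB.mulVec_eigenvectorBasis]
    rfl
  have h1 : ‖Matrix.toEuclideanCLM (n := Fin N) (𝕜 := ℂ) B v‖
      ≤ ‖Matrix.toEuclideanCLM (n := Fin N) (𝕜 := ℂ) B‖ * ‖v‖ :=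
    ContinuousLinearMap.le_opNorm _ _
  rw [happ, norm_smul, hnv, mul_one, mul_one] at h1
  calc hB.eigenvalues i ≤ |hB.eigenvalues i| := le_abs_self _
    _ = ‖(hB.eigenvalues i : ℝ)‖ := rfl
    _ ≤ _ := by exact_mod_cast h1

/-- Proposition 5 (à la Bernstein): if `Z ∼ N_{ℂᴺ}(0,B)` with `B` positive definite
Hermitian, then for every `y > ‖B‖`,
`P(‖Z‖² ≥ N y) ≤ (yᴺ / det B) exp(N (1 − y/‖B‖))`. -/
theorem amoeba_stmt9 {N : ℕ} (B : Matrix (Fin N) (Fin N) ℂ) (hB : B.PosDef)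
    (μ : Measure (Fin N → ℂ))
    (hμ : μ = volume.withDensity fun z =>
      ENNReal.ofReal (Real.exp (-(dotProduct (star z) (B⁻¹.mulVec z)).re)
        / (Real.pi ^ N * B.det.re)))
    (y : ℝ) (hy : ‖Matrix.toEuclideanCLM (n := Fin N) (𝕜 := ℂ) B‖ < y) :
    (μ {z | (N : ℝ) * y ≤ ∑ i, ‖z i‖ ^ 2}).toReal ≤
      y ^ N / B.det.re *
        Real.exp (N * (1 - y / ‖Matrix.toEuclideanCLM (n := Fin N) (𝕜 := ℂ) B‖)) := by
  classical
  subst hμ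
  set nB := ‖Matrix.toEuclideanCLM (n := Fin N) (𝕜 := ℂ) B‖ with hnB
  rcases Nat.eq_zero_or_pos N with hN | hN
  · subst hN
    have hS : {z : Fin 0 → ℂ | ((0:ℕ) : ℝ) * y ≤ ∑ i, ‖z i‖ ^ 2} = Set.univ := by
      ext z; simp
    rw [hS]
    have hdet : B.det = 1 := Matrix.det_isEmpty
    have hdens : (fun z : Fin 0 → ℂ =>
        ENNReal.ofReal (Real.exp (-(dotProduct (star z) (B⁻¹.mulVec z)).re)
          / (Real.pi ^ 0 * B.det.re))) = fun _ => 1 := by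
      funext z
      have h0 : dotProduct (star z) (B⁻¹.mulVec z) = 0 := by
        simp [dotProduct]
      rw [h0, hdet]
      norm_num
    rw [hdens]
    rw [show (fun _ : Fin 0 → ℂ => (1:ℝ≥0∞)) = 1 from rfl, withDensity_one]
    have : (volume : Measure (Fin 0 → ℂ)) Set.univ = 1 := by
      rw [show (volume : Measure (Fin 0 → ℂ)) = Measure.pi fun _ => volume from rfl,
        Measure.pi_univ]
      simp
    rw [this, hdet]
    simp
  -- main case
  have hH := hB.1
  set ev := hH.eigenvalues with hevdef
  have hevpos : ∀ i, 0 < ev i := hB.eigenvalues_pos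
  have hevle : ∀ i, ev i ≤ nB := fun i => eigenvalue_le_opNorm B hH i
  have hpos : 0 < nB := lt_of_lt_of_le (hevpos ⟨0, hN⟩) (hevle ⟨0, hN⟩)
  have hy0 : 0 < y := hpos.trans hy
  set t := nB⁻¹ - y⁻¹ with htdef
  have hinv : y⁻¹ ≤ nB⁻¹ := by
    rw [inv_le_inv₀ hy0 hpos]
    exact hy.le
  have ht0 : 0 ≤ t := sub_nonneg.mpr hinv
  have hdge : ∀ i, y⁻¹ ≤ (ev i)⁻¹ - t := by
    intro i
    have h1 : nB⁻¹ ≤ (ev i)⁻¹ := by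
      rw [inv_le_inv₀ hpos (hevpos i)]
      exact hevle i
    rw [htdef]
    linarith
  have hdpos : ∀ i, 0 < (ev i)⁻¹ - t := fun i =>
    lt_of_lt_of_le (inv_pos.mpr hy0) (hdge i)
  set S := {z : Fin N → ℂ | (N : ℝ) * y ≤ ∑ i, ‖z i‖ ^ 2} with hSdef
  have hSm : MeasurableSet S := measurableSet_le measurable_const continuous_sumsq.measurable
  have hdet : B.det.re = ∏ i, ev i := by
    have h1 : B.det = (((∏ i, ev i : ℝ)) : ℂ) := by
      rw [hH.det_eq_prod_eigenvalues]
      norm_cast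
    rw [h1, Complex.ofReal_re]
  have hdetpos : 0 < B.det.re := by
    rw [hdet]; exact Finset.prod_pos fun i _ => hevpos i
  set c := Real.pi ^ N * B.det.re with hcdef
  have hc : 0 < c := by positivity
  set A := Real.exp (-(t * ((N:ℝ) * y))) / c with hAdef
  have hA0 : 0 ≤ A := by positivity
  -- step 1-2 : bound the measure
  have step1 : (volume.withDensity fun z =>
      ENNReal.ofReal (Real.exp (-(dotProduct (star z) (B⁻¹.mulVec z)).re) / c)) S
      ≤ ENNReal.ofReal A *
        ∫⁻ z : Fin N → ℂ, ENNReal.ofReal (Real.exp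
          (-((star z ⬝ᵥ (B⁻¹ *ᵥ z)).re - t * ∑ i, ‖z i‖ ^ 2))) := by
    rw [withDensity_apply _ hSm]
    have hmono : ∀ z ∈ S,
        ENNReal.ofReal (Real.exp (-(dotProduct (star z) (B⁻¹.mulVec z)).re) / c)
        ≤ ENNReal.ofReal (A * Real.exp
            (-((star z ⬝ᵥ (B⁻¹ *ᵥ z)).re - t * ∑ i, ‖z i‖ ^ 2))) := by
      intro z hz
      apply ENNReal.ofReal_le_ofReal
      rw [hAdef, div_mul_eq_mul_div, div_le_div_iff_of_pos_right hc, ← Real.exp_add]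
      apply Real.exp_le_exp.mpr
      have hzS : (N : ℝ) * y ≤ ∑ i, ‖z i‖ ^ 2 := hz
      have : 0 ≤ t * (∑ i, ‖z i‖ ^ 2 - (N:ℝ) * y) :=
        mul_nonneg ht0 (by linarith)
      nlinarith [this]
    calc ∫⁻ z in S, ENNReal.ofReal
          (Real.exp (-(dotProduct (star z) (B⁻¹.mulVec z)).re) / c)
        ≤ ∫⁻ z in S, ENNReal.ofReal (A * Real.exp
            (-((star z ⬝ᵥ (B⁻¹ *ᵥ z)).re - t * ∑ i, ‖z i‖ ^ 2))) :=
          setLIntegral_mono_ae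
            (Measurable.aemeasurable (Measurable.ennreal_ofReal (Continuous.measurable
              (continuous_const.mul (Continuous.rexp
                (((continuous_quad B⁻¹).sub (continuous_const.mul continuous_sumsq)).neg))))))
            (Filter.Eventually.of_forall hmono)
      _ ≤ ∫⁻ z : Fin N → ℂ, ENNReal.ofReal (A * Real.exp
            (-((star z ⬝ᵥ (B⁻¹ *ᵥ z)).re - t * ∑ i, ‖z i‖ ^ 2))) :=
          setLIntegral_le_lintegral _ _
      _ = ENNReal.ofReal A * ∫⁻ z : Fin N → ℂ, ENNReal.ofReal (Real.exp
            (-((star z ⬝ᵥ (B⁻¹ *ᵥ z)).re - t * ∑ i, ‖z i‖ ^ 2))) := by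
          simp_rw [ENNReal.ofReal_mul hA0]
          exact lintegral_const_mul' _ _ ENNReal.ofReal_ne_top
  -- step 3 : gaussian integral
  rw [key_integral B hB t hdpos] at step1
  -- step 4 : bound the product
  have hprod : (∏ i, Real.pi / ((ev i)⁻¹ - t)) ≤ Real.pi ^ N * y ^ N := by
    calc (∏ i, Real.pi / ((ev i)⁻¹ - t)) ≤ ∏ _i : Fin N, Real.pi * y := by
          apply Finset.prod_le_prod
          · intro i _; exact div_nonneg pi_pos.le (hdpos i).le
          · intro i _
            rw [div_eq_mul_inv]
            apply mul_le_mul_of_nonneg_left _ pi_pos.le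
            calc ((ev i)⁻¹ - t)⁻¹ ≤ (y⁻¹)⁻¹ := by
                  apply inv_anti₀ (by positivity) (hdge i)
              _ = y := inv_inv y
      _ = Real.pi ^ N * y ^ N := by
          rw [Finset.prod_const, Finset.card_univ, Fintype.card_fin, mul_pow]
  have step2 : ENNReal.ofReal A * ENNReal.ofReal (∏ i, Real.pi / ((ev i)⁻¹ - t))
      ≤ ENNReal.ofReal (A * (Real.pi ^ N * y ^ N)) := by
    rw [← ENNReal.ofReal_mul hA0]
    exact ENNReal.ofReal_le_ofReal (mul_le_mul_of_nonneg_left hprod hA0)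
  have hfinal : A * (Real.pi ^ N * y ^ N)
      = y ^ N / B.det.re * Real.exp ((N:ℝ) * (1 - y / nB)) := by
    rw [hAdef, hcdef]
    have hexp : -(t * ((N:ℝ) * y)) = (N:ℝ) * (1 - y / nB) := by
      rw [htdef]
      field_simp
      ring
    rw [hexp]
    have hpi : (0:ℝ) < Real.pi ^ N := by positivity
    field_simp
  have hle := le_trans step1 step2
  rw [hfinal] at hle
  refine ENNReal.toReal_le_of_le_ofReal ?_ hle
  positivity
end

section
/- For every 0 ≤ δ < π/2, the Fubini-Study volume of the ball of radius δ centered at a point of ℂP^n equals (π^n/n!)·sin^{2n}(δ). -/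
/-!
The integrand is radial, so polar coordinates turn the integral into
`2n · vol(B(0,1)) · ∫₀^{tan δ} r^{2n-1} (1 + r²)^{-(n+1)} dr` with `vol(B(0,1)) = πⁿ/n!`.
The radial integrand has the antiderivative `(r²/(1+r²))ⁿ/(2n)`, and
`tan²δ / (1 + tan²δ) = sin²δ`; the case `n = 0` is the unit mass of a point.
-/

open MeasureTheory Metric Module Real Set

section Polar

variable {E F : Type*} [NormedAddCommGroup E] [NormedSpace ℝ E] [FiniteDimensional ℝ E]
  [MeasurableSpace E] [BorelSpace E] [NormedAddCommGroup F] [NormedSpace ℝ F]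

theorem setIntegral_closedBall_fun_norm_addHaar [Nontrivial E] (μ : Measure E)
    [μ.IsAddHaarMeasure] (f : ℝ → F) (R : ℝ) :
    ∫ x in closedBall (0 : E) R, f ‖x‖ ∂μ =
      finrank ℝ E • μ.real (ball 0 1) • ∫ y in Ioc (0 : ℝ) R, y ^ (finrank ℝ E - 1) • f y := by
  have hball : (closedBall (0 : E) R).indicator (fun x => f ‖x‖) =
      fun x => (Iic R).indicator f ‖x‖ := by
    ext x
    by_cases hx : ‖x‖ ≤ R <;> simp [indicator, hx]
  have hradial : (fun y : ℝ => y ^ (finrank ℝ E - 1) • (Iic R).indicator f y) =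
      (Iic R).indicator fun y => y ^ (finrank ℝ E - 1) • f y := by
    ext y
    by_cases hy : y ≤ R <;> simp [indicator, hy]
  rw [← integral_indicator measurableSet_closedBall, hball, integral_fun_norm_addHaar, hradial,
    setIntegral_indicator measurableSet_Iic, Ioi_inter_Iic]

end Polar

section InnerProductSpace

variable {E : Type*} [NormedAddCommGroup E] [InnerProductSpace ℝ E] [FiniteDimensional ℝ E]
  [MeasurableSpace E] [BorelSpace E]

theorem InnerProductSpace.volume_univ_of_subsingleton [Subsingleton E] :
    volume (univ : Set E) = 1 := by
  have h : parallelepiped (stdOrthonormalBasis ℝ E) = univ :=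
    eq_univ_of_forall fun x => (mem_parallelepiped_iff _ x).2 ⟨0, by simp, Subsingleton.elim _ _⟩
  simpa only [h] using (stdOrthonormalBasis ℝ E).volume_parallelepiped

theorem InnerProductSpace.setIntegral_closedBall_of_subsingleton [Subsingleton E]
    {F : Type*} [NormedAddCommGroup F] [NormedSpace ℝ F] [CompleteSpace F] {R : ℝ} (hR : 0 ≤ R)
    (f : E → F) :
    ∫ x in closedBall (0 : E) R, f x = f 0 := by
  have hball : closedBall (0 : E) R = univ :=
    eq_univ_of_forall fun x => by simp [Subsingleton.elim x 0, hR]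
  have hf : f = fun _ => f 0 := funext fun x => by rw [Subsingleton.elim x 0]
  rw [hball, Measure.restrict_univ, hf, integral_const, measureReal_def,
    volume_univ_of_subsingleton, ENNReal.toReal_one, one_smul]

theorem InnerProductSpace.volume_real_ball_zero_one_of_dim_even [Nontrivial E] {k : ℕ}
    (hk : finrank ℝ E = 2 * k) : volume.real (ball (0 : E) 1) = π ^ k / k.factorial := by
  rw [measureReal_def, volume_ball_of_dim_even hk, ENNReal.ofReal_one, one_pow, one_mul,
    ENNReal.toReal_ofReal (by positivity)]

end InnerProductSpace

theorem hasDerivAt_sq_div_one_add_sq_pow {n : ℕ} (hn : n ≠ 0) (y : ℝ) :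
    HasDerivAt (fun y : ℝ => (y ^ 2 / (1 + y ^ 2)) ^ n / (2 * n))
      (y ^ (2 * n - 1) * ((1 + y ^ 2) ^ (n + 1))⁻¹) y := by
  have hpos : (0 : ℝ) < 1 + y ^ 2 := by positivity
  have hsq : HasDerivAt (fun y : ℝ => y ^ 2) (2 * y) y := by simpa using hasDerivAt_pow 2 y
  refine (((hsq.div (hsq.const_add 1) hpos.ne').pow n).div_const (2 * n : ℝ)).congr_deriv ?_
  obtain ⟨m, rfl⟩ := Nat.exists_eq_add_one_of_ne_zero hn
  rw [show 2 * (m + 1) - 1 = 2 * m + 1 by omega, Nat.add_sub_cancel, Pi.div_apply, div_pow]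
  field_simp
  ring

theorem integral_pow_mul_inv_one_add_sq_pow {n : ℕ} (hn : n ≠ 0) (T : ℝ) :
    ∫ y in (0 : ℝ)..T, y ^ (2 * n - 1) * ((1 + y ^ 2) ^ (n + 1))⁻¹ =
      (T ^ 2 / (1 + T ^ 2)) ^ n / (2 * n) := by
  have hcont : Continuous fun y : ℝ => y ^ (2 * n - 1) * ((1 + y ^ 2) ^ (n + 1))⁻¹ :=
    (continuous_pow _).mul <| (by fun_prop : Continuous fun y : ℝ => (1 + y ^ 2) ^ (n + 1)).inv₀
      fun y => by positivity
  rw [intervalIntegral.integral_eq_sub_of_hasDerivAt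
    (fun y _ => hasDerivAt_sq_div_one_add_sq_pow hn y) (hcont.intervalIntegrable 0 T)]
  simp [hn]

/-- Lemma 12: for `0 ≤ δ < π/2`, the Fubini–Study volume of the ball of radius `δ` of
`ℂPⁿ` equals `(πⁿ/n!) sin²ⁿ(δ)`. In the affine chart `ℂⁿ`, the ball of FS radius `δ`
around the origin is the Euclidean ball of radius `tan δ`, and the Fubini–Study volume
form is `dVol/(1+‖z‖²)ⁿ⁺¹` with respect to the Lebesgue measure. -/
theorem amoeba_stmt11 {n : ℕ} (δ : ℝ) (hδ0 : 0 ≤ δ) (hδ : δ < Real.pi / 2) :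
    (∫ z : EuclideanSpace ℝ (Fin (2 * n)) in Metric.closedBall 0 (Real.tan δ),
        ((1 + ‖z‖ ^ 2) ^ (n + 1))⁻¹) =
      Real.pi ^ n / n.factorial * Real.sin δ ^ (2 * n) := by
  have hcos : cos δ ≠ 0 := (cos_pos_of_mem_Ioo ⟨by linarith [pi_pos], hδ⟩).ne'
  have htan : 0 ≤ tan δ := tan_nonneg_of_nonneg_of_le_pi_div_two hδ0 hδ.le
  rcases eq_or_ne n 0 with rfl | hn
  · have : Subsingleton (EuclideanSpace ℝ (Fin (2 * 0))) := by rw [mul_zero]; infer_instance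
    rw [InnerProductSpace.setIntegral_closedBall_of_subsingleton htan]
    simp
  have : Nontrivial (EuclideanSpace ℝ (Fin (2 * n))) := by
    have : Nonempty (Fin (2 * n)) := ⟨⟨0, by omega⟩⟩
    infer_instance
  have hdim : finrank ℝ (EuclideanSpace ℝ (Fin (2 * n))) = 2 * n := by simp
  rw [setIntegral_closedBall_fun_norm_addHaar volume (fun y => ((1 + y ^ 2) ^ (n + 1))⁻¹),
    InnerProductSpace.volume_real_ball_zero_one_of_dim_even hdim, hdim]
  simp only [smul_eq_mul, nsmul_eq_mul]
  rw [← intervalIntegral.integral_of_le htan, integral_pow_mul_inv_one_add_sq_pow hn,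
    tan_sq_div_one_add_tan_sq hcos, pow_mul]
  have hn' : (n : ℝ) ≠ 0 := Nat.cast_ne_zero.2 hn
  push_cast
  field_simp
end

section
/- For all u, v ∈ ℂ^n identified with the affine chart of ℂP^n, the Bergman kernel function satisfies |B(u,v)| ≤ N_d · cos(d_FS(u,v))^d, where N_d = C(d+n,n) and d_FS is the Fubini-Study distance. -/
/-- The Fubini–Study distance between two points of `ℂPⁿ`, given by nonzero homogeneous
coordinate vectors `u, v ∈ ℂⁿ⁺¹`: `d_FS([u],[v]) = arccos (|⟨u,v⟩| / (‖u‖ ‖v‖))`. -/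
noncomputable def fsDist {m : ℕ} (u v : EuclideanSpace ℂ (Fin m)) : ℝ :=
  Real.arccos (‖inner ℂ u v‖ / (‖u‖ * ‖v‖))

/-- Lemma 19: for all `u, v` in the affine chart `ℂⁿ ⊂ ℂPⁿ`, the Bergman kernel
function `B(u,v) = N_d (1+⟨u,v⟩)^d/((1+‖u‖²)^{d/2}(1+‖v‖²)^{d/2})` satisfies
`|B(u,v)| ≤ N_d cos(d_FS(u,v))^d`, where `N_d = C(d+n,n)`, `⟨u,v⟩ = Σ u_k conj(v_k)`,
and `d_FS` is the Fubini–Study distance between `[1:u]` and `[1:v]`. -/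
theorem amoeba_stmt16 {n d : ℕ} (u v : EuclideanSpace ℂ (Fin n)) :
    ‖(((d + n).choose n : ℂ) * (1 + ∑ k, u k * (starRingEnd ℂ) (v k)) ^ d /
        ((((1 + ‖u‖ ^ 2) ^ ((d : ℝ) / 2) : ℝ) : ℂ) *
          (((1 + ‖v‖ ^ 2) ^ ((d : ℝ) / 2) : ℝ) : ℂ)))‖ ≤
      ((d + n).choose n : ℝ) *
        Real.cos (fsDist
            ((WithLp.equiv 2 (Fin (n + 1) → ℂ)).symm
              (Fin.cons 1 (WithLp.equiv 2 (Fin n → ℂ) u)))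
            ((WithLp.equiv 2 (Fin (n + 1) → ℂ)).symm
              (Fin.cons 1 (WithLp.equiv 2 (Fin n → ℂ) v)))) ^ d := by
  set U := (WithLp.equiv 2 (Fin (n + 1) → ℂ)).symm (Fin.cons 1 (WithLp.equiv 2 (Fin n → ℂ) u))
  set V := (WithLp.equiv 2 (Fin (n + 1) → ℂ)).symm (Fin.cons 1 (WithLp.equiv 2 (Fin n → ℂ) v))
  have hUV : (inner ℂ U V : ℂ) = 1 + ∑ k, (starRingEnd ℂ) (u k) * v k := by
    simp [U, V, PiLp.inner_apply, RCLike.inner_apply, Fin.sum_univ_succ, mul_comm]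
  have hnU : ‖U‖ = Real.sqrt (1 + ‖u‖^2) := by
    rw [EuclideanSpace.norm_eq, Fin.sum_univ_succ]
    simp [U, EuclideanSpace.norm_eq, Real.sq_sqrt (Finset.sum_nonneg (fun i _ => sq_nonneg _))]
  have hnV : ‖V‖ = Real.sqrt (1 + ‖v‖^2) := by
    rw [EuclideanSpace.norm_eq, Fin.sum_univ_succ]
    simp [V, EuclideanSpace.norm_eq, Real.sq_sqrt (Finset.sum_nonneg (fun i _ => sq_nonneg _))]
  set t := ‖(1 + ∑ k, u k * (starRingEnd ℂ) (v k))‖ with ht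
  have habs : ‖(inner ℂ U V : ℂ)‖ = t := by
    rw [hUV, ht]
    rw [show (1 + ∑ k, (starRingEnd ℂ) (u k) * v k)
        = (starRingEnd ℂ) (1 + ∑ k, u k * (starRingEnd ℂ) (v k)) by
      simp [map_sum, mul_comm]]
    exact Complex.norm_conj _
  set a := Real.sqrt (1 + ‖u‖^2) with ha
  set b := Real.sqrt (1 + ‖v‖^2) with hb
  have ha0 : 0 < a := Real.sqrt_pos.2 (by positivity)
  have hb0 : 0 < b := Real.sqrt_pos.2 (by positivity)
  have hcos : Real.cos (fsDist U V) = t / (a * b) := by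
    rw [fsDist, Real.cos_arccos, habs, hnU, hnV]
    · have h1 : 0 ≤ ‖(inner ℂ U V : ℂ)‖ / (‖U‖ * ‖V‖) := by positivity
      linarith
    · rw [div_le_one (by rw [hnU, hnV]; positivity)]
      exact norm_inner_le_norm (𝕜 := ℂ) U V
  rw [hcos]
  have hrpow : ∀ x : ℝ, 0 ≤ x → ((1 + x) ^ ((d : ℝ) / 2) : ℝ) = Real.sqrt (1 + x) ^ d := by
    intro x hx
    rw [Real.sqrt_eq_rpow, ← Real.rpow_natCast ((1+x) ^ ((1:ℝ)/2)) d,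
      ← Real.rpow_mul (by linarith)]
    ring_nf
  have e1 : ((1 + ‖u‖^2 : ℝ) ^ ((d : ℝ) / 2) : ℝ) = a ^ d := hrpow _ (sq_nonneg _)
  have e2 : ((1 + ‖v‖^2 : ℝ) ^ ((d : ℝ) / 2) : ℝ) = b ^ d := hrpow _ (sq_nonneg _)
  rw [e1, e2, norm_div, norm_mul, norm_mul, norm_pow, Complex.norm_natCast,
    Complex.norm_real, Complex.norm_real, Real.norm_eq_abs, Real.norm_eq_abs, abs_of_nonneg (by positivity),
    abs_of_nonneg (by positivity), ← ht]
  rw [div_pow, mul_pow, mul_div_assoc]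
end

section
/- Let d ≥ 2 and let ρ_0 be the smaller positive solution of ρ²/(1+ρ²)^{3/2} = 2/(πd). Then 2/(πd − 3) ≤ ρ_0² ≤ 4/((πd − 3) + √((πd − 3)² − 6)). -/
/-! With `x = ρ₀²` and `a = π d − 3`, the defining equation reads `π d · x = 2 (1 + x)^{3/2}`.
Bernoulli's inequality `1 + 3x/2 ≤ (1 + x)^{3/2}` gives `a x ≥ 2`, the lower bound. The second-order
bound `(1 + x)^{3/2} ≤ 1 + 3x/2 + 3x²/8` gives `3x² − 4a x + 8 ≥ 0`, so `x` lies outside the open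
interval between the roots `(2a ± 2√(a² − 6))/3`; since `x < 2 < 2a/3`, it is below the smaller
root, which equals `4/(a + √(a² − 6))`. -/

open Real

theorem sq_rpow_three_halves {t : ℝ} (ht : 0 ≤ t) : (t ^ ((3 : ℝ) / 2)) ^ 2 = t ^ 3 := by
  rw [← rpow_natCast _ 2, ← rpow_mul ht]
  norm_num

theorem one_add_rpow_three_halves_le {x : ℝ} (hx : 0 ≤ x) :
    (1 + x) ^ ((3 : ℝ) / 2) ≤ 1 + 3 / 2 * x + 3 / 8 * x ^ 2 := by
  refine le_of_pow_le_pow_left₀ two_ne_zero (by positivity) ?_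
  rw [sq_rpow_three_halves (by linarith)]
  have hgap : (1 + 3 / 2 * x + 3 / 8 * x ^ 2) ^ 2 - (1 + x) ^ 3 = x ^ 3 / 8 + 9 / 64 * x ^ 4 := by
    ring
  have hgap_nonneg : 0 ≤ x ^ 3 / 8 + 9 / 64 * x ^ 4 := by positivity
  linarith

theorem le_four_div_add_sqrt {a x : ℝ} (ha : 0 < a) (ha6 : 6 ≤ a ^ 2) (hxa : 3 * x ≤ 2 * a)
    (hq : a * x ≤ 2 + 3 / 4 * x ^ 2) : x ≤ 4 / (a + √(a ^ 2 - 6)) := by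
  set s := √(a ^ 2 - 6)
  have hs : s ^ 2 = a ^ 2 - 6 := sq_sqrt (by linarith)
  have has : 0 < a + s := by positivity
  have hsx : 2 * s ≤ 2 * a - 3 * x :=
    le_of_pow_le_pow_left₀ two_ne_zero (by linarith) (by nlinarith)
  rw [le_div_iff₀ has]
  nlinarith [mul_le_mul_of_nonneg_right hsx has.le]

/-- Lemma B.2 (first part): for `d ≥ 2`, if `ρ₀` is the smaller positive solution of
`ρ²/(1+ρ²)^{3/2} = 2/(π d)` (i.e. the one lying in `(0, √2)`), then
`2/(π d − 3) ≤ ρ₀² ≤ 4/((π d − 3) + √((π d − 3)² − 6))`. -/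
theorem amoeba_stmt18 (d : ℕ) (hd : 2 ≤ d) (ρ₀ : ℝ) (hρpos : 0 < ρ₀)
    (hρlt : ρ₀ < Real.sqrt 2)
    (hρ : ρ₀ ^ 2 / (1 + ρ₀ ^ 2) ^ ((3 : ℝ) / 2) = 2 / (Real.pi * d)) :
    2 / (Real.pi * d - 3) ≤ ρ₀ ^ 2 ∧
      ρ₀ ^ 2 ≤ 4 / ((Real.pi * d - 3) + Real.sqrt ((Real.pi * d - 3) ^ 2 - 6)) := by
  have ha : 3 < π * d - 3 := by
    have hd' : (2 : ℝ) ≤ d := by exact_mod_cast hd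
    nlinarith [pi_gt_three]
  set x := ρ₀ ^ 2
  have hx0 : 0 < x := by positivity
  have hx2 : x < 2 := (lt_sqrt hρpos.le).mp hρlt
  have heq : π * d * x = 2 * (1 + x) ^ ((3 : ℝ) / 2) := by
    rw [div_eq_div_iff (by positivity) (by positivity)] at hρ
    linarith
  have hlow := one_add_mul_self_le_rpow_one_add (by linarith : (-1 : ℝ) ≤ x)
    (by norm_num : (1 : ℝ) ≤ 3 / 2)
  have hup := one_add_rpow_three_halves_le hx0.le
  constructor
  · rw [div_le_iff₀ (by linarith)]
    linarith
  · exact le_four_div_add_sqrt (by linarith) (by nlinarith) (by linarith) (by linarith)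
end
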